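/- arXiv:math/0406294 — 2 statements merged into one kernel-verified Lean document; each statement's English description precedes it below -/
import Mathlib

section
/- Let A be a unital complex Banach algebra, let p, w ∈ A, and let U ⊆ ℂ be an open set such that p − λ·1 is invertible for every λ ∈ U. Then for every integer k ≥ 0 the map λ ↦ (p − λ)⁻¹·(w·(p − λ)⁻¹)^k is infinitely complex-differentiable on U, and for every integer m ≥ 1 its (m−1)-st derivative at λ ∈ U equals (m−1)! times the sum, over all (k+1)-tuples (m₀, m₁, …, m_k) of positive integers with m₀ + m₁ + ⋯ + m_k = m + k, of the noncommutative products (p − λ)^(−m₀)·w·(p − λ)^(−m₁)·w ⋯ w·(p − λ)^(−m_k). -/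
/-!
Write `R(λ) = (p - λ)⁻¹`, so that `R' = R²`. By the Leibniz rule the derivative of a word
`c₀ R^{m₀} c₁ R^{m₁} ⋯ c_{n-1} R^{m_{n-1}}` is `∑ⱼ mⱼ` times the same word with `mⱼ` raised by one.
Summing over all compositions of `N` into `n` positive parts, every composition of `N + 1` is
reached with total multiplicity `N + 1 - n`, so the composition sum `S_N` has derivative
`(N + 1 - n) S_{N+1}`. Starting from `S_n = R (w R)^k` (with `c = (1, w, …, w)`, `n = k + 1`),
the `j`-th derivative is `j! S_{n+j}`.
-/

open Finset
open scoped Nat Ring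

def posAntidiagonalTuple (n N : ℕ) : Finset (Fin n → ℕ) :=
  (Nat.antidiagonalTuple n N).filter fun ms => ∀ i, 1 ≤ ms i

section Compositions

variable {n N : ℕ}

theorem mem_posAntidiagonalTuple {ms : Fin n → ℕ} :
    ms ∈ posAntidiagonalTuple n N ↔ ∑ i, ms i = N ∧ ∀ i, 1 ≤ ms i := by
  rw [posAntidiagonalTuple, mem_filter, Nat.mem_antidiagonalTuple]

theorem posAntidiagonalTuple_self (n : ℕ) : posAntidiagonalTuple n n = {1} := by
  ext ms
  simp only [mem_posAntidiagonalTuple, mem_singleton]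
  refine ⟨fun ⟨hsum, hpos⟩ => ?_, ?_⟩
  · have hle : (∑ i, ms i) - ∑ _i : Fin n, 1 = 0 := by simp [hsum]
    rw [← sum_tsub_distrib _ fun i _ => hpos i, sum_eq_zero_iff] at hle
    exact funext fun i => le_antisymm (Nat.sub_eq_zero_iff_le.mp (hle i (mem_univ i))) (hpos i)
  · rintro rfl
    simp

theorem sum_add_single_one (ms : Fin n → ℕ) (j : Fin n) :
    ∑ i, (ms + Pi.single j 1 : Fin n → ℕ) i = ∑ i, ms i + 1 := by
  simp [sum_add_distrib]

theorem single_one_le_of_one_le {ms : Fin n → ℕ} {j : Fin n} (h : 1 ≤ ms j) :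
    Pi.single j 1 ≤ ms := by
  intro i
  rcases eq_or_ne i j with rfl | hij
  · simpa
  · simp [hij]

theorem sum_sub_one_of_mem_posAntidiagonalTuple {ms : Fin n → ℕ}
    (hms : ms ∈ posAntidiagonalTuple n N) : ∑ i, (ms i - 1) = N - n := by
  obtain ⟨hsum, hpos⟩ := mem_posAntidiagonalTuple.mp hms
  simp [sum_tsub_distrib _ fun i _ => hpos i, hsum]

variable {M : Type*} [AddCommMonoid M]

/-- Raising the `j`-th part by one is a bijection from compositions of `N` onto the compositions
of `N + 1` whose `j`-th part is at least `2`; the others carry the weight `0`. -/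
theorem sum_smul_add_single_eq (j : Fin n) (g : (Fin n → ℕ) → M) :
    ∑ ms ∈ posAntidiagonalTuple n N, ms j • g (ms + Pi.single j 1)
      = ∑ ms ∈ posAntidiagonalTuple n (N + 1), (ms j - 1) • g ms := by
  have hdrop : ∑ ms ∈ posAntidiagonalTuple n (N + 1) with 2 ≤ ms j, (ms j - 1) • g ms
      = ∑ ms ∈ posAntidiagonalTuple n (N + 1), (ms j - 1) • g ms :=
    sum_filter_of_ne fun ms _ h => by
      by_contra hlt
      exact h (by rw [show ms j - 1 = 0 by omega, zero_smul])
  rw [← hdrop]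
  refine sum_nbij' (· + Pi.single j 1) (· - Pi.single j 1) ?_ ?_ ?_ ?_ ?_
  · intro ms hms
    obtain ⟨hsum, hpos⟩ := mem_posAntidiagonalTuple.mp hms
    refine mem_filter.mpr ⟨mem_posAntidiagonalTuple.mpr ⟨by rw [sum_add_single_one, hsum],
      fun i => (hpos i).trans (Nat.le_add_right _ _)⟩, ?_⟩
    simpa using hpos j
  · intro ms hms
    obtain ⟨hms, h2⟩ := mem_filter.mp hms
    obtain ⟨hsum, hpos⟩ := mem_posAntidiagonalTuple.mp hms
    have hcancel : ms - Pi.single j 1 + Pi.single j 1 = ms :=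
      tsub_add_cancel_of_le (single_one_le_of_one_le (hpos j))
    refine mem_posAntidiagonalTuple.mpr ⟨?_, fun i => ?_⟩
    · have := sum_add_single_one (ms - Pi.single j 1) j
      rw [hcancel, hsum] at this
      omega
    · rcases eq_or_ne i j with rfl | hij
      · simp only [Pi.sub_apply, Pi.single_eq_same]; omega
      · simpa [hij] using hpos i
  · intro ms _
    exact add_tsub_cancel_right ms _
  · intro ms hms
    exact tsub_add_cancel_of_le (single_one_le_of_one_le
      ((mem_posAntidiagonalTuple.mp (mem_filter.mp hms).1).2 j))
  · intro ms _
    simp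

/-- A composition `ms` of `N + 1` arises from `ms - e_j` with weight `ms j - 1` for each `j`, and
these weights add up to `N + 1 - n`. -/
theorem sum_posAntidiagonalTuple_sum_smul_add_single (g : (Fin n → ℕ) → M) :
    ∑ ms ∈ posAntidiagonalTuple n N, ∑ j, ms j • g (ms + Pi.single j 1)
      = (N + 1 - n) • ∑ ms ∈ posAntidiagonalTuple n (N + 1), g ms := by
  rw [sum_comm]
  simp_rw [sum_smul_add_single_eq]
  rw [sum_comm, smul_sum]
  refine sum_congr rfl fun ms hms => ?_
  rw [← sum_smul, sum_sub_one_of_mem_posAntidiagonalTuple hms]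

end Compositions

section ResolventWords

variable {𝕜 A : Type*} [NontriviallyNormedField 𝕜] [NormedRing A] [NormedAlgebra 𝕜 A]

variable (p : A) in
noncomputable def resolventWord {n : ℕ} (c : Fin n → A) (ms : Fin n → ℕ) (x : 𝕜) : A :=
  (List.ofFn fun i => c i * (p - x • (1 : A))⁻¹ʳ ^ ms i).prod

theorem resolventWord_succ {p : A} {n : ℕ} (c : Fin (n + 1) → A) (ms : Fin (n + 1) → ℕ) (x : 𝕜) :
    resolventWord p c ms x
      = c 0 * (p - x • (1 : A))⁻¹ʳ ^ ms 0 * resolventWord p (Fin.tail c) (Fin.tail ms) x := by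
  simp [resolventWord, List.ofFn_succ, mul_assoc, Fin.tail]

variable [CompleteSpace A] {p : A} {x : 𝕜}

theorem hasDerivAt_inverse_sub_smul_one (hx : IsUnit (p - x • (1 : A))) :
    HasDerivAt (fun y : 𝕜 => (p - y • (1 : A))⁻¹ʳ) ((p - x • (1 : A))⁻¹ʳ ^ 2) x := by
  have hlin : HasDerivAt (fun y : 𝕜 => p - y • (1 : A)) (-1) x := by
    simpa using ((hasDerivAt_id x).smul_const (1 : A)).const_sub p
  have hinv : (p - x • (1 : A))⁻¹ʳ = ↑hx.unit⁻¹ := by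
    rw [← Ring.inverse_unit, hx.unit_spec]
  refine ((hasFDerivAt_ringInverse hx.unit).comp_hasDerivAt x hlin).congr_deriv ?_
  simp [hinv, sq]

theorem hasDerivAt_inverse_sub_smul_one_pow (hx : IsUnit (p - x • (1 : A))) (m : ℕ) :
    HasDerivAt (fun y : 𝕜 => (p - y • (1 : A))⁻¹ʳ ^ m) (m • (p - x • (1 : A))⁻¹ʳ ^ (m + 1)) x := by
  induction m with
  | zero => simpa using hasDerivAt_const x (1 : A)
  | succ m ih =>
    convert ih.mul (hasDerivAt_inverse_sub_smul_one hx) using 1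
    · funext y; exact pow_succ _ _
    · rw [smul_mul_assoc, ← pow_succ, ← pow_add, succ_nsmul]

theorem hasDerivAt_resolventWord (hx : IsUnit (p - x • (1 : A))) {n : ℕ} (c : Fin n → A)
    (ms : Fin n → ℕ) :
    HasDerivAt (resolventWord p c ms)
      (∑ j, ms j • resolventWord p c (ms + Pi.single j 1) x) x := by
  induction n with
  | zero =>
    have hword : resolventWord p c ms = fun _ : 𝕜 => (1 : A) :=
      funext fun y => by simp [resolventWord]
    rw [hword]
    simpa using hasDerivAt_const x (1 : A)
  | succ n ih =>
    have hhead := (hasDerivAt_inverse_sub_smul_one_pow hx (ms 0)).const_mul (c 0)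
    rw [show resolventWord p c ms = _ from funext (resolventWord_succ (𝕜 := 𝕜) c ms)]
    refine (hhead.mul (ih (Fin.tail c) (Fin.tail ms))).congr_deriv ?_
    have htail_zero : Fin.tail (ms + Pi.single 0 1) = Fin.tail ms := by
      ext i; simp [Fin.tail, Fin.succ_ne_zero]
    have htail_succ (j : Fin n) :
        Fin.tail (ms + Pi.single j.succ 1) = Fin.tail ms + Pi.single j 1 := by
      ext i; simp [Fin.tail, Pi.single_apply]
    simp only [Fin.sum_univ_succ, resolventWord_succ, htail_zero, htail_succ, mul_sum,
      Pi.add_apply, Pi.single_eq_same, Pi.single_eq_of_ne' (Fin.succ_ne_zero _), add_zero,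
      mul_smul_comm, smul_mul_assoc]
    rfl

theorem hasDerivAt_sum_resolventWord (hx : IsUnit (p - x • (1 : A))) {n : ℕ} (c : Fin n → A)
    (N : ℕ) :
    HasDerivAt (fun y => ∑ ms ∈ posAntidiagonalTuple n N, resolventWord p c ms y)
      ((N + 1 - n) • ∑ ms ∈ posAntidiagonalTuple n (N + 1), resolventWord p c ms x) x := by
  rw [← sum_posAntidiagonalTuple_sum_smul_add_single]
  exact HasDerivAt.fun_sum fun ms _ => hasDerivAt_resolventWord hx c ms

theorem iteratedDerivWithin_resolventWord_one {U : Set 𝕜} (hU : IsOpen U)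
    (hinv : ∀ x ∈ U, IsUnit (p - x • (1 : A))) {n : ℕ} (c : Fin n → A) (j : ℕ) :
    ∀ x ∈ U, iteratedDerivWithin j (resolventWord p c 1) U x
      = j ! • ∑ ms ∈ posAntidiagonalTuple n (n + j), resolventWord p c ms x := by
  induction j with
  | zero => simp [posAntidiagonalTuple_self]
  | succ j ih =>
    intro x hx
    have hderiv := (hasDerivAt_sum_resolventWord (hinv x hx) c (n + j)).fun_const_smul j !
    rw [iteratedDerivWithin_succ, derivWithin_congr ih (ih x hx),
      hderiv.hasDerivWithinAt.derivWithin (hU.uniqueDiffOn x hx), smul_smul,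
      show n + j + 1 - n = j + 1 by omega, Nat.factorial_succ, mul_comm]
    rfl

end ResolventWords

/-- **Derivatives of resolvent expressions in a Banach algebra.**
Let `A` be a unital complex Banach algebra, `p, w ∈ A`, `U ⊆ ℂ` open with `p − λ·1`
invertible for all `λ ∈ U`.  Then for every `k ≥ 0` the map
`λ ↦ (p−λ)⁻¹·(w·(p−λ)⁻¹)^k` is infinitely complex-differentiable on `U`, and for every `m ≥ 1`
its `(m−1)`-st derivative at `λ ∈ U` equals `(m−1)!` times the sum over `(k+1)`-tuples
`(m₀,…,m_k)` of positive integers with `m₀+⋯+m_k = m+k` of the noncommutative products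
`(p−λ)^(−m₀)·w·(p−λ)^(−m₁)·w ⋯ w·(p−λ)^(−m_k)`. -/
theorem resolvent_power_iterated_deriv
    (A : Type*) [NormedRing A] [NormedAlgebra ℂ A] [CompleteSpace A]
    (p w : A) (U : Set ℂ) (hU : IsOpen U)
    (hinv : ∀ lam ∈ U, IsUnit (p - lam • (1 : A))) (k : ℕ) :
    ContDiffOn ℂ (⊤ : ℕ∞)
      (fun lam : ℂ => Ring.inverse (p - lam • (1 : A)) *
        (w * Ring.inverse (p - lam • (1 : A))) ^ k) U ∧
    ∀ m : ℕ, 1 ≤ m → ∀ lam ∈ U,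
      iteratedDerivWithin (m - 1)
          (fun lam : ℂ => Ring.inverse (p - lam • (1 : A)) *
            (w * Ring.inverse (p - lam • (1 : A))) ^ k) U lam
        = (m - 1).factorial •
            ∑ ms ∈ (Finset.Nat.antidiagonalTuple (k + 1) (m + k)).filter
                (fun ms => ∀ i, 1 ≤ ms i),
              Ring.inverse (p - lam • (1 : A)) ^ ms 0 *
                (List.ofFn fun i : Fin k =>
                  w * Ring.inverse (p - lam • (1 : A)) ^ ms i.succ).prod := by
  set c : Fin (k + 1) → A := Fin.cons 1 fun _ => w with hc
  have hword (ms : Fin (k + 1) → ℕ) (lam : ℂ) :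
      resolventWord p c ms lam = (p - lam • (1 : A))⁻¹ʳ ^ ms 0 *
        (List.ofFn fun i : Fin k => w * (p - lam • (1 : A))⁻¹ʳ ^ ms i.succ).prod := by
    rw [resolventWord_succ, hc, Fin.cons_zero, one_mul, Fin.tail_cons]
    rfl
  have hf : (fun lam : ℂ => (p - lam • (1 : A))⁻¹ʳ * (w * (p - lam • (1 : A))⁻¹ʳ) ^ k)
      = resolventWord p c 1 := by
    funext lam
    simp [hword, List.ofFn_const, List.prod_replicate]
  rw [hf]
  refine ⟨DifferentiableOn.contDiffOn (fun x hx =>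
    (hasDerivAt_resolventWord (hinv x hx) c 1).differentiableAt.differentiableWithinAt) hU, ?_⟩
  rintro m hm lam hlam
  obtain ⟨j, rfl⟩ := Nat.exists_eq_add_of_le' hm
  simp only [← hword, Nat.add_sub_cancel]
  rw [iteratedDerivWithin_resolventWord_one hU hinv c j lam hlam,
    show k + 1 + j = j + 1 + k by omega]
  rfl
end

section
/- For every integer j ≥ 0 one has q_j = Σ_{μ,ν ≥ 0, μ+2ν = j} q_{μ,ν} · T^(μ+ν+1) in ℂ[r₁,…,r_m, x₁,…,x_n, ξ₁,…,ξ_n][T], where the q_j are defined recursively by q_{−1} = 0, q_0 = T, and q_{j+1} = T·(Δ − a₂)(q_{j−1}) − T·a₁·q_j for j ≥ 0 (with Δ and multiplication by a₁, a₂ acting coefficientwise in T). -/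
open MvPolynomial

/-- Variable index type: `Fin m` for the curvature variables `r`, then `Fin (2m)` for the
fibre variables `x`, then `Fin (2m)` for the cotangent variables `ξ`. -/
abbrev Idx (m : ℕ) := Fin m ⊕ (Fin (2 * m) ⊕ Fin (2 * m))

/-- The polynomial `a₁ = i·Σ_{j=1}^m (r_j/2)·(x_{2j−1}·ξ_{2j} − x_{2j}·ξ_{2j−1})`. -/
noncomputable def a1 (m : ℕ) : MvPolynomial (Idx m) ℂ :=
  C Complex.I *
    ∑ j : Fin m,
      (C (1 / 2 : ℂ) * X (Sum.inl j)) *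
        (X (Sum.inr (Sum.inl ⟨2 * j.1, by have := j.2; omega⟩)) *
            X (Sum.inr (Sum.inr ⟨2 * j.1 + 1, by have := j.2; omega⟩))
          - X (Sum.inr (Sum.inl ⟨2 * j.1 + 1, by have := j.2; omega⟩)) *
            X (Sum.inr (Sum.inr ⟨2 * j.1, by have := j.2; omega⟩)))

/-- The polynomial `a₂ = −(1/4)·Σ_{j=1}^m (r_j/2)²·(x_{2j−1}² + x_{2j}²)`. -/
noncomputable def a2 (m : ℕ) : MvPolynomial (Idx m) ℂ :=
  -(C (1 / 4 : ℂ) *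
    ∑ j : Fin m,
      (C (1 / 2 : ℂ) * X (Sum.inl j)) ^ 2 *
        (X (Sum.inr (Sum.inl ⟨2 * j.1, by have := j.2; omega⟩)) ^ 2
          + X (Sum.inr (Sum.inl ⟨2 * j.1 + 1, by have := j.2; omega⟩)) ^ 2))

/-- The Laplacian `Δ = Σ_{i=1}^n ∂²/∂x_i²` in the `x`-variables, acting on polynomials. -/
noncomputable def lap (m : ℕ) (p : MvPolynomial (Idx m) ℂ) : MvPolynomial (Idx m) ℂ :=
  ∑ i : Fin (2 * m),
    pderiv (Sum.inr (Sum.inl i)) (pderiv (Sum.inr (Sum.inl i)) p)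

/-- The resolvent-symbol coefficients `q_{μ,ν}`: `q_{0,0} = 1`, `q_{μ,ν} = 0` for a negative
index, and `q_{μ,ν} = −a₁·q_{μ−1,ν} + (Δ − a₂)·q_{μ,ν−1}` otherwise. -/
noncomputable def qc (m : ℕ) : ℕ → ℕ → MvPolynomial (Idx m) ℂ
  | 0, 0 => 1
  | μ + 1, 0 => -a1 m * qc m μ 0
  | 0, ν + 1 => lap m (qc m 0 ν) - a2 m * qc m 0 ν
  | μ + 1, ν + 1 =>
      -a1 m * qc m μ (ν + 1) + (lap m (qc m (μ + 1) ν) - a2 m * qc m (μ + 1) ν)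

/-- The coefficientwise (in `T`) action of the Laplacian `Δ` on `ℂ[r,x,ξ][T]`. -/
noncomputable def lapT (m : ℕ) (p : Polynomial (MvPolynomial (Idx m) ℂ)) :
    Polynomial (MvPolynomial (Idx m) ℂ) :=
  p.sum fun n c => Polynomial.C (lap m c) * Polynomial.X ^ n

/-- The resolvent symbols `q_j ∈ ℂ[r,x,ξ][T]`, defined recursively by `q_{−1} = 0`, `q_0 = T`,
and `q_{j+1} = T·(Δ − a₂)(q_{j−1}) − T·a₁·q_j` (with `Δ` and multiplication by `a₁`, `a₂`
acting coefficientwise in `T`). -/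
noncomputable def qres (m : ℕ) : ℕ → Polynomial (MvPolynomial (Idx m) ℂ)
  | 0 => Polynomial.X
  | 1 => -(Polynomial.X * (Polynomial.C (a1 m) * qres m 0))
  | j + 2 =>
      Polynomial.X * (lapT m (qres m j) - Polynomial.C (a2 m) * qres m j)
        - Polynomial.X * (Polynomial.C (a1 m) * qres m (j + 1))


/-! Both sides satisfy the same two-step recursion. For `(μ, ν) ≠ (0, 0)` the recursion
defining `q_{μ,ν}` writes the term `q_{μ,ν} T^{μ+ν+1}` as `−T·a₁` applied to the term of
`(μ − 1, ν)` plus `T·(Δ − a₂)` applied to the term of `(μ, ν − 1)`. Lowering `μ` (resp. `ν`)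
by one is a bijection from the pairs of weight `μ + 2ν = j + 2` with `μ ≠ 0` (resp. `ν ≠ 0`)
onto those of weight `j + 1` (resp. `j`). -/

open Finset

def weightedAntidiagonal (j : ℕ) : Finset (ℕ × ℕ) :=
  (range (j + 1) ×ˢ range (j + 1)).filter (fun p => p.1 + 2 * p.2 = j)

@[simp]
lemma mem_weightedAntidiagonal {j : ℕ} {p : ℕ × ℕ} :
    p ∈ weightedAntidiagonal j ↔ p.1 + 2 * p.2 = j := by
  simp only [weightedAntidiagonal, mem_filter, mem_product, mem_range]
  omega

lemma weightedAntidiagonal_zero : weightedAntidiagonal 0 = {(0, 0)} := by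
  ext ⟨μ, ν⟩
  simp only [mem_weightedAntidiagonal, mem_singleton, Prod.mk.injEq]
  omega

lemma weightedAntidiagonal_one : weightedAntidiagonal 1 = {(1, 0)} := by
  ext ⟨μ, ν⟩
  simp only [mem_weightedAntidiagonal, mem_singleton, Prod.mk.injEq]
  omega

lemma filter_fst_ne_zero_weightedAntidiagonal (j : ℕ) :
    (weightedAntidiagonal (j + 1)).filter (fun p => p.1 ≠ 0)
      = (weightedAntidiagonal j).map ((addRightEmbedding 1).prodMap (.refl ℕ)) := by
  ext ⟨μ, ν⟩
  cases μ <;> simp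
  omega

lemma filter_snd_ne_zero_weightedAntidiagonal (j : ℕ) :
    (weightedAntidiagonal (j + 2)).filter (fun p => p.2 ≠ 0)
      = (weightedAntidiagonal j).map
          ((Function.Embedding.refl ℕ).prodMap (addRightEmbedding 1)) := by
  ext ⟨μ, ν⟩
  cases ν <;> simp
  omega

lemma sum_weightedAntidiagonal_succ_fst {M : Type*} [AddCommMonoid M]
    (f : ℕ × ℕ → M) (j : ℕ) :
    ∑ p ∈ weightedAntidiagonal (j + 1), (if p.1 = 0 then 0 else f (p.1 - 1, p.2))
      = ∑ p ∈ weightedAntidiagonal j, f p := by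
  rw [sum_ite, sum_const_zero, zero_add, filter_fst_ne_zero_weightedAntidiagonal, sum_map]
  simp

lemma sum_weightedAntidiagonal_add_two_snd {M : Type*} [AddCommMonoid M]
    (f : ℕ × ℕ → M) (j : ℕ) :
    ∑ p ∈ weightedAntidiagonal (j + 2), (if p.2 = 0 then 0 else f (p.1, p.2 - 1))
      = ∑ p ∈ weightedAntidiagonal j, f p := by
  rw [sum_ite, sum_const_zero, zero_add, filter_snd_ne_zero_weightedAntidiagonal, sum_map]
  simp

section ResolventSymbols

variable (m : ℕ)

local notation "𝓟" => Polynomial (MvPolynomial (Idx m) ℂ)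

lemma lap_add (p q : MvPolynomial (Idx m) ℂ) : lap m (p + q) = lap m p + lap m q := by
  simp only [lap, map_add, sum_add_distrib]

lemma lap_zero : lap m 0 = 0 := by
  simp only [lap, map_zero, sum_const_zero]

lemma lapT_C_mul_X_pow (c : MvPolynomial (Idx m) ℂ) (n : ℕ) :
    lapT m (Polynomial.C c * Polynomial.X ^ n) = Polynomial.C (lap m c) * Polynomial.X ^ n := by
  rw [Polynomial.C_mul_X_pow_eq_monomial]
  exact Polynomial.sum_monomial_index _ _ (by rw [lap_zero, map_zero, zero_mul])

lemma lapT_add (p q : 𝓟) : lapT m (p + q) = lapT m p + lapT m q :=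
  Polynomial.sum_add_index _ _ _ (fun n => by rw [lap_zero, map_zero, zero_mul])
    (fun n c d => by rw [lap_add, map_add, add_mul])

noncomputable def lapTHom : 𝓟 →+ 𝓟 := AddMonoidHom.mk' (lapT m) (lapT_add m)

/-- `P ↦ T·(Δ − a₂)P`, the second-order part of the symbol recursion. -/
noncomputable def tLapSubA2 : 𝓟 →+ 𝓟 :=
  (AddMonoidHom.mulLeft Polynomial.X).comp
    (lapTHom m - AddMonoidHom.mulLeft (Polynomial.C (a2 m)))

/-- `P ↦ −T·a₁·P`, the first-order part of the symbol recursion. -/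
noncomputable def mulNegTA1 : 𝓟 →+ 𝓟 :=
  AddMonoidHom.mulLeft (-(Polynomial.X * Polynomial.C (a1 m)))

lemma tLapSubA2_C_mul_X_pow (c : MvPolynomial (Idx m) ℂ) (n : ℕ) :
    tLapSubA2 m (Polynomial.C c * Polynomial.X ^ n)
      = Polynomial.C (lap m c - a2 m * c) * Polynomial.X ^ (n + 1) := by
  simp only [tLapSubA2, lapTHom, AddMonoidHom.comp_apply, AddMonoidHom.sub_apply,
    AddMonoidHom.mk'_apply, AddMonoidHom.coe_mulLeft, lapT_C_mul_X_pow, map_sub, map_mul]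
  ring

lemma mulNegTA1_C_mul_X_pow (c : MvPolynomial (Idx m) ℂ) (n : ℕ) :
    mulNegTA1 m (Polynomial.C c * Polynomial.X ^ n)
      = Polynomial.C (-a1 m * c) * Polynomial.X ^ (n + 1) := by
  simp only [mulNegTA1, AddMonoidHom.coe_mulLeft, map_mul, map_neg]
  ring

lemma qres_one : qres m 1 = mulNegTA1 m (qres m 0) := by
  simp only [qres, mulNegTA1, AddMonoidHom.coe_mulLeft]
  ring

lemma qres_add_two (j : ℕ) :
    qres m (j + 2) = tLapSubA2 m (qres m j) + mulNegTA1 m (qres m (j + 1)) := by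
  simp only [qres, tLapSubA2, mulNegTA1, lapTHom, AddMonoidHom.comp_apply,
    AddMonoidHom.sub_apply, AddMonoidHom.mk'_apply, AddMonoidHom.coe_mulLeft]
  ring

noncomputable def qcTerm (p : ℕ × ℕ) : 𝓟 :=
  Polynomial.C (qc m p.1 p.2) * Polynomial.X ^ (p.1 + p.2 + 1)

lemma qcTerm_eq_of_ne_zero {p : ℕ × ℕ} (hp : p ≠ (0, 0)) :
    qcTerm m p = (if p.1 = 0 then 0 else mulNegTA1 m (qcTerm m (p.1 - 1, p.2)))
      + (if p.2 = 0 then 0 else tLapSubA2 m (qcTerm m (p.1, p.2 - 1))) := by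
  obtain ⟨_ | μ, _ | ν⟩ := p
  · exact absurd rfl hp
  · simp [qcTerm, qc, tLapSubA2_C_mul_X_pow]
  · simp [qcTerm, qc, mulNegTA1_C_mul_X_pow]
  · simp only [qcTerm, qc, Nat.add_one_ne_zero, if_false, Nat.add_sub_cancel, map_add,
      mulNegTA1_C_mul_X_pow, tLapSubA2_C_mul_X_pow]
    ring

noncomputable def qcSum (j : ℕ) : 𝓟 := ∑ p ∈ weightedAntidiagonal j, qcTerm m p

lemma qcSum_zero : qcSum m 0 = Polynomial.X := by
  simp [qcSum, weightedAntidiagonal_zero, qcTerm, qc]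

lemma qcSum_one : qcSum m 1 = mulNegTA1 m (qcSum m 0) := by
  simp only [qcSum, weightedAntidiagonal_one, weightedAntidiagonal_zero, sum_singleton, qcTerm, qc,
    mulNegTA1_C_mul_X_pow]

lemma qcSum_add_two (j : ℕ) :
    qcSum m (j + 2) = tLapSubA2 m (qcSum m j) + mulNegTA1 m (qcSum m (j + 1)) := by
  calc qcSum m (j + 2)
      = ∑ p ∈ weightedAntidiagonal (j + 2),
            (if p.1 = 0 then 0 else mulNegTA1 m (qcTerm m (p.1 - 1, p.2)))
          + ∑ p ∈ weightedAntidiagonal (j + 2),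
            (if p.2 = 0 then 0 else tLapSubA2 m (qcTerm m (p.1, p.2 - 1))) := by
        rw [← sum_add_distrib]
        exact sum_congr rfl fun p hp => qcTerm_eq_of_ne_zero m (by rintro rfl; simp at hp)
    _ = ∑ p ∈ weightedAntidiagonal (j + 1), mulNegTA1 m (qcTerm m p)
          + ∑ p ∈ weightedAntidiagonal j, tLapSubA2 m (qcTerm m p) :=
        congrArg₂ (· + ·)
          (sum_weightedAntidiagonal_succ_fst (fun p => mulNegTA1 m (qcTerm m p)) (j + 1))
          (sum_weightedAntidiagonal_add_two_snd (fun p => tLapSubA2 m (qcTerm m p)) j)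
    _ = tLapSubA2 m (qcSum m j) + mulNegTA1 m (qcSum m (j + 1)) := by
        rw [qcSum, qcSum, map_sum, map_sum, add_comm]

end ResolventSymbols

theorem qres_eq_sum_qc_general (m : ℕ) (j : ℕ) :
    qres m j
      = ∑ p ∈ (Finset.range (j + 1) ×ˢ Finset.range (j + 1)).filter
          (fun p => p.1 + 2 * p.2 = j),
          Polynomial.C (qc m p.1 p.2) * Polynomial.X ^ (p.1 + p.2 + 1) := by
  change qres m j = qcSum m j
  induction j using Nat.twoStepInduction with
  | zero => exact (qcSum_zero m).symm
  | one => rw [qres_one, qcSum_one, qcSum_zero]; rfl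
  | more j ih₀ ih₁ => rw [qres_add_two, qcSum_add_two, ih₀, ih₁]

/-- **Resolvent symbol expansion.**  For every `j ≥ 0`,
`q_j = Σ_{μ+2ν=j} q_{μ,ν} · T^(μ+ν+1)` in `ℂ[r,x,ξ][T]`. -/
theorem qres_eq_sum_qc (m : ℕ) (hm : 1 ≤ m) (j : ℕ) :
    qres m j
      = ∑ p ∈ (Finset.range (j + 1) ×ˢ Finset.range (j + 1)).filter
          (fun p => p.1 + 2 * p.2 = j),
          Polynomial.C (qc m p.1 p.2) * Polynomial.X ^ (p.1 + p.2 + 1) :=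
  qres_eq_sum_qc_general m j
end
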